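/- The continuous maps f, g : S² → Conf₃(S³) defined by f(ξ) = (j(q₁), j(ξ), j(q₃)) and g(ξ) = (j(q₁), j(q₂), j(q₂ + ξ)) are well defined (their values are triples of pairwise distinct points of S³) and are homotopic as continuous maps into Conf₃(S³). (This expresses the relation β₂₁ = β₃₂ in π₂(Conf₃(S³)).) -/

import Mathlib

open Metric

noncomputable section

abbrev E3 : Type := EuclideanSpace ℝ (Fin 3)
abbrev E4 : Type := EuclideanSpace ℝ (Fin 4)

/-- `e = (1,0,0) ∈ ℝ³`. -/
def e : E3 := EuclideanSpace.single (0 : Fin 3) (1 : ℝ)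

def q1 : E3 := 0
def q2 : E3 := (4 : ℝ) • e
def q3 : E3 := (8 : ℝ) • e

/-- The unit sphere `S² ⊂ ℝ³`. -/
abbrev S2 : Type := sphere (0 : E3) 1

/-- The unit sphere `S³ ⊂ ℝ⁴`. -/
abbrev S3 : Type := sphere (0 : E4) 1

/-- Inverse stereographic projection `j : ℝ³ → ℝ⁴`, `j(x) = (2x, ‖x‖² − 1)/(‖x‖² + 1)`;
its image lies on the unit sphere `S³`, missing only the north pole `(0,0,0,1)`. -/
def jmap (x : E3) : E4 :=
  (WithLp.equiv 2 (Fin 4 → ℝ)).symm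
    ![2 * x 0 / (‖x‖ ^ 2 + 1), 2 * x 1 / (‖x‖ ^ 2 + 1), 2 * x 2 / (‖x‖ ^ 2 + 1),
      (‖x‖ ^ 2 - 1) / (‖x‖ ^ 2 + 1)]

/-- The configuration space `Conf₃(S³)` of 3 (ordered, pairwise distinct) points of `S³`,
with the subspace topology. -/
abbrev Conf3S : Type :=
  {p : S3 × S3 × S3 // p.1 ≠ p.2.1 ∧ p.1 ≠ p.2.2 ∧ p.2.1 ≠ p.2.2}

/-!
Stereographic projection from `j(q₁)` identifies `S³ ∖ {j(q₁)}` with `ℝ³` and turns `j` into the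
inversion `ι x = x / ‖x‖²`. Both cycles then come from maps `S² → Conf₂(ℝ³)`, namely
`ξ ↦ (ξ, ι q₃)` and `ξ ↦ (ι q₂, ι (q₂ + ξ))`, and since `(a, b) ↦ (a, b - a)` identifies
`Conf₂(ℝ³)` with `ℝ³ × (ℝ³ ∖ 0)`, only the difference maps `S² → ℝ³ ∖ 0` have to be connected.
The first one is homotopic to `-id`; the second one, inversion being orientation reversing, to the
reflection in `e⊥`; and these two are joined through a rotoreflection about `e`. Each homotopy is a
straight line: consecutive maps in the chain have pointwise nonnegative inner product, so no segment
passes through `0`.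
-/

open EuclideanGeometry ContinuousMap

abbrev Conf2 (V : Type*) : Type _ := {p : V × V // p.1 ≠ p.2}

section Conf2

variable {X V : Type*} [TopologicalSpace X] [AddCommGroup V] [TopologicalSpace V] [IsTopologicalAddGroup V]

def Conf2.diff : C(Conf2 V, ({0}ᶜ : Set V)) :=
  ⟨fun p => ⟨p.1.2 - p.1.1, sub_ne_zero.2 p.2.symm⟩, by fun_prop⟩

@[simp]
theorem Conf2.coe_diff (p : Conf2 V) : (diff p : V) = p.1.2 - p.1.1 := rfl

variable [Module ℝ V] [ContinuousSMul ℝ V]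

theorem Conf2.homotopic_of_homotopic_diff {f g : C(X, Conf2 V)}
    (h : (diff.comp f).Homotopic (diff.comp g)) : f.Homotopic g := by
  obtain ⟨H⟩ := h
  let A := Homotopy.affine ⟨fun x => (f x).1.1, by fun_prop⟩ ⟨fun x => (g x).1.1, by fun_prop⟩
  refine ⟨{ toFun := fun p => ⟨(A p, A p + H p), fun hp => (H p).2 ?_⟩
            continuous_toFun := by fun_prop
            map_zero_left := fun x => ?_
            map_one_left := fun x => ?_ }⟩
  · simpa using hp
  · ext <;> simp [A]
  · ext <;> simp [A]

end Conf2

theorem homotopic_punctured_of_inner_nonneg {X V : Type*} [TopologicalSpace X]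
    [NormedAddCommGroup V] [InnerProductSpace ℝ V] {f g : C(X, ({0}ᶜ : Set V))}
    (h : ∀ x, 0 ≤ inner ℝ (f x : V) (g x)) : f.Homotopic g := by
  let A := Homotopy.affine ((ContinuousMap.mk Subtype.val continuous_subtype_val).comp f)
    ((ContinuousMap.mk Subtype.val continuous_subtype_val).comp g)
  have hA : ∀ p, A p ≠ 0 := by
    rintro ⟨⟨t, ht0, ht1⟩, x⟩ hA
    have hsum : (1 - t) • (f x : V) + t • (g x : V) = 0 := by
      simpa [A, AffineMap.lineMap_apply_module] using hA
    have hinner : (1 - t) * ‖(f x : V)‖ ^ 2 + t * inner ℝ (f x : V) (g x) = 0 := by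
      simpa [inner_add_right, inner_smul_right, real_inner_self_eq_norm_sq] using
        congrArg (inner ℝ (f x : V)) hsum
    obtain ht1 | rfl := ht1.lt_or_eq
    · have : 0 < (1 - t) * ‖(f x : V)‖ ^ 2 :=
        mul_pos (sub_pos.2 ht1) (pow_pos (norm_pos_iff.2 (f x).2) 2)
      nlinarith [h x]
    · have hg : (g x : V) ≠ 0 := (g x).2
      simp [hg] at hsum
  exact ⟨{ toFun := fun p => ⟨A p, hA p⟩
           map_zero_left := fun x => Subtype.ext (A.apply_zero x)
           map_one_left := fun x => Subtype.ext (A.apply_one x) }⟩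

theorem E3.inner_eq (u v : E3) : inner ℝ u v = u 0 * v 0 + u 1 * v 1 + u 2 * v 2 := by
  simp [PiLp.inner_apply, Fin.sum_univ_three, mul_comm]

theorem E3.norm_sq_eq (v : E3) : ‖v‖ ^ 2 = v 0 ^ 2 + v 1 ^ 2 + v 2 ^ 2 := by
  rw [← real_inner_self_eq_norm_sq, E3.inner_eq]; ring

def invStereoSouth (y : E3) : E4 :=
  !₂[2 * y 0 / (‖y‖ ^ 2 + 1), 2 * y 1 / (‖y‖ ^ 2 + 1), 2 * y 2 / (‖y‖ ^ 2 + 1),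
    (1 - ‖y‖ ^ 2) / (‖y‖ ^ 2 + 1)]

@[fun_prop]
theorem continuous_invStereoSouth : Continuous invStereoSouth := by
  unfold invStereoSouth
  fun_prop (disch := intro; positivity)

theorem norm_invStereoSouth (y : E3) : ‖invStereoSouth y‖ = 1 := by
  rw [← sq_eq_sq₀ (norm_nonneg _) zero_le_one, one_pow, EuclideanSpace.norm_sq_eq]
  simp only [invStereoSouth, Real.norm_eq_abs, sq_abs, Fin.sum_univ_four, Matrix.cons_val_zero,
    Matrix.cons_val_one, Matrix.cons_val, div_pow]
  field_simp
  rw [E3.norm_sq_eq]; ring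

theorem one_add_invStereoSouth_three (y : E3) :
    1 + invStereoSouth y 3 = 2 / (‖y‖ ^ 2 + 1) := by
  simp only [invStereoSouth, Matrix.cons_val]
  field_simp
  ring

theorem invStereoSouth_apply_castSucc (y : E3) (i : Fin 3) :
    invStereoSouth y i.castSucc = (1 + invStereoSouth y 3) * y i := by
  rw [one_add_invStereoSouth_three]
  fin_cases i <;>
    simp only [Fin.zero_eta, Fin.mk_one, Fin.reduceFinMk, Fin.castSucc_zero, Fin.castSucc_one,
      Fin.reduceCastSucc, invStereoSouth, Matrix.cons_val_zero, Matrix.cons_val_one,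
      Matrix.cons_val] <;>
    ring

theorem invStereoSouth_injective : Function.Injective invStereoSouth := by
  intro y z h
  have h3 : 1 + invStereoSouth y 3 ≠ 0 := by rw [one_add_invStereoSouth_three]; positivity
  ext i
  have hi := invStereoSouth_apply_castSucc y i
  rw [h, invStereoSouth_apply_castSucc, ← h] at hi
  exact (mul_left_cancel₀ h3 hi).symm

theorem invStereoSouth_ne_jmap_zero (y : E3) : invStereoSouth y ≠ jmap 0 := by
  intro h
  have h3 := one_add_invStereoSouth_three y
  have hj : jmap 0 3 = -1 := by simp [jmap]
  rw [h, hj, add_neg_cancel] at h3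
  exact (by positivity : (0 : ℝ) < 2 / (‖y‖ ^ 2 + 1)).ne h3

theorem inversion_zero_one (x : E3) : inversion 0 1 x = (‖x‖ ^ 2)⁻¹ • x := by
  simp [inversion]

theorem invStereoSouth_inversion {x : E3} (hx : x ≠ 0) :
    invStereoSouth (inversion 0 1 x) = jmap x := by
  have hn : ‖x‖ ≠ 0 := norm_ne_zero_iff.2 hx
  rw [inversion_zero_one]
  ext i
  fin_cases i <;>
    simp only [invStereoSouth, jmap, WithLp.equiv_symm_apply, PiLp.smul_apply, smul_eq_mul,
      norm_smul, norm_inv, norm_pow, norm_norm, Fin.zero_eta, Fin.mk_one, Fin.reduceFinMk,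
      Matrix.cons_val_zero, Matrix.cons_val_one, Matrix.cons_val] <;>
    field_simp <;> ring

def southPole : S3 := ⟨jmap q1, by simp [jmap, q1, EuclideanSpace.norm_eq, Fin.sum_univ_four]⟩

def invStereoSouthS3 (y : E3) : S3 := ⟨invStereoSouth y, by simp [norm_invStereoSouth]⟩

def conf2ToConf3S : C(Conf2 E3, Conf3S) :=
  ⟨fun p => ⟨(southPole, invStereoSouthS3 p.1.1, invStereoSouthS3 p.1.2),
    fun h => invStereoSouth_ne_jmap_zero _ (congrArg Subtype.val h).symm,
    fun h => invStereoSouth_ne_jmap_zero _ (congrArg Subtype.val h).symm,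
    fun h => p.2 (invStereoSouth_injective (congrArg Subtype.val h))⟩,
   by unfold invStereoSouthS3; fun_prop⟩

theorem norm_e : ‖e‖ = 1 := by simp [e]

theorem e_apply_zero : e 0 = 1 := by simp [e]

theorem e_apply_one : e 1 = 0 := by simp [e]

theorem e_apply_two : e 2 = 0 := by simp [e]

theorem norm_q2 : ‖q2‖ = 4 := by simp [q2, norm_smul, norm_e]

theorem norm_q3 : ‖q3‖ = 8 := by simp [q3, norm_smul, norm_e]

theorem norm_inversion_zero_one (x : E3) : ‖inversion 0 1 x‖ = ‖x‖⁻¹ := by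
  simpa using dist_inversion_center (0 : E3) x 1

theorem S2.sum_sq_coords (ξ : S2) : (ξ : E3) 0 ^ 2 + (ξ : E3) 1 ^ 2 + (ξ : E3) 2 ^ 2 = 1 := by
  rw [← E3.norm_sq_eq, norm_eq_of_mem_sphere, one_pow]

theorem S2.q2_add_ne_zero (ξ : S2) : q2 + (ξ : E3) ≠ 0 := by
  intro h
  have hn := congrArg norm (eq_neg_of_add_eq_zero_right h)
  rw [norm_neg, norm_q2, norm_eq_of_mem_sphere] at hn
  norm_num at hn

def beta21Conf2 : C(S2, Conf2 E3) :=
  ⟨fun ξ => ⟨((ξ : E3), inversion 0 1 q3), fun h => by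
    have hn := norm_inversion_zero_one q3
    rw [← show (ξ : E3) = inversion 0 1 q3 from h, norm_eq_of_mem_sphere, norm_q3] at hn
    norm_num at hn⟩, by fun_prop⟩

def beta32Conf2 : C(S2, Conf2 E3) :=
  ⟨fun ξ => ⟨(inversion 0 1 q2, inversion 0 1 (q2 + ξ)), fun h => ne_zero_of_mem_unit_sphere ξ
      (by simpa using inversion_injective (0 : E3) one_ne_zero h)⟩,
    (continuous_const.prodMk (continuous_const.inversion continuous_const (by fun_prop)
      S2.q2_add_ne_zero)).subtype_mk _⟩

def S2.toPunctured (φ : E3 → E3) (hφ : Continuous φ) (hφn : ∀ v, ‖φ v‖ = ‖v‖) :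
    C(S2, ({0}ᶜ : Set E3)) :=
  ⟨fun ξ => ⟨φ ξ, by simp [← norm_ne_zero_iff, hφn]⟩, by fun_prop⟩

def reflectE (v : E3) : E3 := !₂[-v 0, v 1, v 2]

/-- The reflection `reflectE` followed by a quarter turn about `e`; `-id` is `reflectE` followed
by the half turn. -/
def reflectQuarterTurn (v : E3) : E3 := !₂[-v 0, -v 2, v 1]

@[fun_prop]
theorem continuous_reflectE : Continuous reflectE := by unfold reflectE; fun_prop

@[fun_prop]
theorem continuous_reflectQuarterTurn : Continuous reflectQuarterTurn := by
  unfold reflectQuarterTurn; fun_prop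

theorem norm_reflectE (v : E3) : ‖reflectE v‖ = ‖v‖ := by
  rw [← sq_eq_sq₀ (norm_nonneg _) (norm_nonneg _), E3.norm_sq_eq, E3.norm_sq_eq]
  simp [reflectE]

theorem norm_reflectQuarterTurn (v : E3) : ‖reflectQuarterTurn v‖ = ‖v‖ := by
  rw [← sq_eq_sq₀ (norm_nonneg _) (norm_nonneg _), E3.norm_sq_eq, E3.norm_sq_eq]
  simp only [reflectQuarterTurn, Matrix.cons_val_zero, Matrix.cons_val_one, Matrix.cons_val, neg_sq]
  ring

theorem inner_neg_reflectQuarterTurn (v : E3) : inner ℝ (-v) (reflectQuarterTurn v) = v 0 ^ 2 := by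
  simp only [reflectQuarterTurn, inner_neg_left, E3.inner_eq, Matrix.cons_val_zero,
    Matrix.cons_val_one, Matrix.cons_val]
  ring

theorem inner_reflectQuarterTurn_reflectE (v : E3) :
    inner ℝ (reflectQuarterTurn v) (reflectE v) = v 0 ^ 2 := by
  simp only [reflectQuarterTurn, reflectE, E3.inner_eq, Matrix.cons_val_zero, Matrix.cons_val_one,
    Matrix.cons_val]
  ring

theorem diff_beta21_homotopic_neg :
    (Conf2.diff.comp beta21Conf2).Homotopic (S2.toPunctured Neg.neg continuous_neg norm_neg) := by
  refine homotopic_punctured_of_inner_nonneg fun ξ => ?_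
  have hcs := real_inner_le_norm (inversion 0 1 q3) (ξ : E3)
  rw [norm_inversion_zero_one, norm_q3, norm_eq_of_mem_sphere] at hcs
  change 0 ≤ inner ℝ (inversion 0 1 q3 - ξ) (-(ξ : E3))
  rw [inner_neg_right, inner_sub_left, real_inner_self_eq_norm_sq, norm_eq_of_mem_sphere]
  linarith

theorem neg_homotopic_reflectE :
    (S2.toPunctured Neg.neg continuous_neg norm_neg).Homotopic
      (S2.toPunctured reflectE continuous_reflectE norm_reflectE) := by
  refine .trans (homotopic_punctured_of_inner_nonneg (g := S2.toPunctured reflectQuarterTurn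
    continuous_reflectQuarterTurn norm_reflectQuarterTurn) fun ξ => ?_)
    (homotopic_punctured_of_inner_nonneg fun ξ => ?_)
  · exact (sq_nonneg _).trans_eq (inner_neg_reflectQuarterTurn ξ).symm
  · exact (sq_nonneg _).trans_eq (inner_reflectQuarterTurn_reflectE ξ).symm

theorem inner_reflectE_diff_beta32 (ξ : S2) :
    inner ℝ (reflectE ξ) (inversion 0 1 (q2 + ξ) - inversion 0 1 q2) =
      (1 + (ξ : E3) 0 / 4) / (17 + 8 * (ξ : E3) 0) := by
  have h1 := S2.sum_sq_coords ξ
  have hD : ‖q2 + (ξ : E3)‖ ^ 2 = 17 + 8 * (ξ : E3) 0 := by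
    rw [E3.norm_sq_eq]
    simp only [q2, PiLp.add_apply, PiLp.smul_apply, smul_eq_mul, e_apply_zero, e_apply_one,
      e_apply_two]
    linear_combination h1
  have hD0 : 17 + 8 * (ξ : E3) 0 ≠ 0 := by nlinarith
  rw [inversion_zero_one, inversion_zero_one, hD, norm_q2, E3.inner_eq]
  simp only [reflectE, Matrix.cons_val_zero, Matrix.cons_val_one, Matrix.cons_val, q2,
    PiLp.sub_apply, PiLp.add_apply, PiLp.smul_apply, smul_eq_mul, e_apply_zero, e_apply_one,
    e_apply_two]
  linear_combination (-(ξ : E3) 0 / 4) * inv_mul_cancel₀ hD0 + (17 + 8 * (ξ : E3) 0)⁻¹ * h1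

theorem reflectE_homotopic_diff_beta32 :
    (S2.toPunctured reflectE continuous_reflectE norm_reflectE).Homotopic
      (Conf2.diff.comp beta32Conf2) := by
  refine homotopic_punctured_of_inner_nonneg fun ξ => ?_
  have h1 := S2.sum_sq_coords ξ
  exact (div_nonneg (by nlinarith) (by nlinarith)).trans_eq (inner_reflectE_diff_beta32 ξ).symm

/-- The spherical cycles `ξ ↦ (j(q₁), j(ξ), j(q₃))` and `ξ ↦ (j(q₁), j(q₂), j(q₂ + ξ))` are
well defined maps `S² → Conf₃(S³)` and are homotopic: the relation `β₂₁ = β₃₂` holds in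
`π₂(Conf₃(S³))`. -/
theorem beta21_eq_beta32_in_conf3_sphere :
    ∃ f g : C(S2, Conf3S),
      (∀ ξ : S2,
        ((f ξ).1.1 : E4) = jmap q1 ∧
        ((f ξ).1.2.1 : E4) = jmap (ξ : E3) ∧
        ((f ξ).1.2.2 : E4) = jmap q3) ∧
      (∀ ξ : S2,
        ((g ξ).1.1 : E4) = jmap q1 ∧
        ((g ξ).1.2.1 : E4) = jmap q2 ∧
        ((g ξ).1.2.2 : E4) = jmap (q2 + (ξ : E3))) ∧
      f.Homotopic g := by
  have hjξ (ξ : S2) : invStereoSouth ξ = jmap ξ := by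
    rw [← invStereoSouth_inversion (ne_zero_of_mem_unit_sphere ξ), inversion_of_mem_sphere ξ.2]
  refine ⟨conf2ToConf3S.comp beta21Conf2, conf2ToConf3S.comp beta32Conf2,
    fun ξ => ⟨rfl, hjξ ξ, invStereoSouth_inversion ?_⟩,
    fun ξ => ⟨rfl, invStereoSouth_inversion ?_, invStereoSouth_inversion (S2.q2_add_ne_zero ξ)⟩,
    Homotopic.comp (.refl _) (Conf2.homotopic_of_homotopic_diff ?_)⟩
  · exact norm_ne_zero_iff.1 (by simp [norm_q3])
  · exact norm_ne_zero_iff.1 (by simp [norm_q2])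
  · exact (diff_beta21_homotopic_neg.trans neg_homotopic_reflectE).trans
      reflectE_homotopic_diff_beta32
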